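/- arXiv:2407.09731 — 2 statements merged into one kernel-verified Lean document; each statement's English description precedes it below -/
import Mathlib

section
/- Let f be a monotone submodular function on subsets of a finite set V with f(∅) = 0, and let OPT be any subset of size at most k_opt. Define a greedy sequence S_0 = ∅ and S_{j+1} = S_j ∪ {v_{j+1}} where v_{j+1} maximizes the marginal gain f(S_j ∪ {v}) - f(S_j) over v ∈ V. Then for every j ≥ 0, f(S_j) ≥ (1 - (1 - 1/k_opt)^j) · f(OPT). -/
/-!
Submodularity bounds the value of `S ∪ OPT` by `f S` plus the sum of the marginal gains of the
at most `k` elements of `OPT`, each of which is at most the greedy gain. Hence every greedy step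
closes at least a `1/k` fraction of the gap `f OPT - f S`, so the gap decays like `(1 - 1/k)^j`
from its initial value, which is at most `f OPT` because `f ≥ 0`.
-/

section Submodular

variable {α : Type*} [DecidableEq α] {f : Finset α → ℝ}

theorem le_add_sum_marginal
    (hsub : ∀ A B : Finset α, A ⊆ B → ∀ v ∉ B,
      f (insert v B) - f B ≤ f (insert v A) - f A)
    (A T : Finset α) : f (A ∪ T) ≤ f A + ∑ v ∈ T, (f (insert v A) - f A) := by
  induction T using Finset.induction_on with
  | empty => simp
  | @insert a T haT ih =>
    have hstep : f (insert a (A ∪ T)) - f (A ∪ T) ≤ f (insert a A) - f A := by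
      by_cases haA : a ∈ A
      · simp [haA, Finset.mem_union]
      · exact hsub A (A ∪ T) Finset.subset_union_left a (by simp [haA, haT])
    rw [Finset.union_insert, Finset.sum_insert haT]
    linarith

theorem sub_le_mul_greedy_gain
    (hmono : ∀ A B : Finset α, A ⊆ B → f A ≤ f B)
    (hsub : ∀ A B : Finset α, A ⊆ B → ∀ v ∉ B,
      f (insert v B) - f B ≤ f (insert v A) - f A)
    {S OPT : Finset α} {k : ℕ} (hOPT : OPT.card ≤ k) {v : α}
    (hv : ∀ u, f (insert u S) - f S ≤ f (insert v S) - f S) :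
    f OPT - f S ≤ k * (f (insert v S) - f S) := by
  have hgain : 0 ≤ f (insert v S) - f S :=
    sub_nonneg.mpr (hmono _ _ (Finset.subset_insert v S))
  calc f OPT - f S
      ≤ f (S ∪ OPT) - f S := by linarith [hmono OPT (S ∪ OPT) Finset.subset_union_right]
    _ ≤ ∑ u ∈ OPT, (f (insert u S) - f S) := by linarith [le_add_sum_marginal hsub S OPT]
    _ ≤ ∑ _u ∈ OPT, (f (insert v S) - f S) := Finset.sum_le_sum fun u _ => hv u
    _ = OPT.card * (f (insert v S) - f S) := by rw [Finset.sum_const, nsmul_eq_mul]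
    _ ≤ k * (f (insert v S) - f S) := by gcongr

end Submodular

theorem sub_le_one_sub_inv_mul_of_sub_le_mul {c x y k : ℝ} (hk : 0 < k)
    (h : c - x ≤ k * (y - x)) : c - y ≤ (1 - 1 / k) * (c - x) := by
  have : (c - x) / k ≤ y - x := by rwa [div_le_iff₀' hk]
  linarith [show (1 - 1 / k) * (c - x) = c - x - (c - x) / k by ring]

theorem sub_le_pow_mul_of_sub_succ_le {x : ℕ → ℝ} {c r : ℝ} (hr : 0 ≤ r)
    (h : ∀ j, c - x (j + 1) ≤ r * (c - x j)) (j : ℕ) : c - x j ≤ r ^ j * (c - x 0) := by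
  induction j with
  | zero => simp
  | succ j ih =>
    calc c - x (j + 1) ≤ r * (c - x j) := h j
      _ ≤ r * (r ^ j * (c - x 0)) := by gcongr
      _ = r ^ (j + 1) * (c - x 0) := by ring

theorem greedy_submodular_bound_general {α : Type*} [DecidableEq α]
    (f : Finset α → ℝ)
    (hnonneg : ∀ S, 0 ≤ f S)
    (hmono : ∀ A B : Finset α, A ⊆ B → f A ≤ f B)
    (hsub : ∀ A B : Finset α, A ⊆ B → ∀ v ∉ B,
      f (insert v B) - f B ≤ f (insert v A) - f A)
    (kopt : ℕ) (hkopt : 1 ≤ kopt) (OPT : Finset α) (hOPT : OPT.card ≤ kopt)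
    (S : ℕ → Finset α)
    (hgreedy : ∀ j, ∃ v : α, S (j + 1) = insert v (S j) ∧
      ∀ u : α, f (insert u (S j)) - f (S j) ≤ f (insert v (S j)) - f (S j)) :
    ∀ j : ℕ, (1 - (1 - 1 / (kopt : ℝ)) ^ j) * f OPT ≤ f (S j) := by
  intro j
  have hk : (1 : ℝ) ≤ kopt := by exact_mod_cast hkopt
  have hr : 0 ≤ 1 - 1 / (kopt : ℝ) := by
    rw [sub_nonneg, div_le_one (by linarith)]
    exact hk
  have hgap : ∀ i, f OPT - f (S (i + 1)) ≤ (1 - 1 / (kopt : ℝ)) * (f OPT - f (S i)) := by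
    intro i
    obtain ⟨v, hSv, hv⟩ := hgreedy i
    rw [hSv]
    exact sub_le_one_sub_inv_mul_of_sub_le_mul (by linarith)
      (sub_le_mul_greedy_gain hmono hsub hOPT hv)
  have hdecay := sub_le_pow_mul_of_sub_succ_le (x := fun j => f (S j)) hr hgap j
  have hS0 : 0 ≤ (1 - 1 / (kopt : ℝ)) ^ j * f (S 0) := mul_nonneg (pow_nonneg hr j) (hnonneg _)
  linarith

/-- Nemhauser–Wolsey–Fisher greedy bound: for monotone submodular `f ≥ 0` with
`f ∅ = 0` and any `OPT` of size at most `k_opt`, the greedy sequence satisfies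
`f(S_j) ≥ (1 - (1 - 1/k_opt)^j) f(OPT)`. -/
theorem greedy_submodular_bound {α : Type*} [DecidableEq α] [Fintype α]
    (f : Finset α → ℝ)
    (hnonneg : ∀ S, 0 ≤ f S)
    (hempty : f ∅ = 0)
    (hmono : ∀ A B : Finset α, A ⊆ B → f A ≤ f B)
    (hsub : ∀ A B : Finset α, A ⊆ B → ∀ v ∉ B,
      f (insert v B) - f B ≤ f (insert v A) - f A)
    (kopt : ℕ) (hkopt : 1 ≤ kopt) (OPT : Finset α) (hOPT : OPT.card ≤ kopt)
    (S : ℕ → Finset α) (hS0 : S 0 = ∅)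
    (hgreedy : ∀ j, ∃ v : α, S (j + 1) = insert v (S j) ∧
      ∀ u : α, f (insert u (S j)) - f (S j) ≤ f (insert v (S j)) - f (S j)) :
    ∀ j : ℕ, (1 - (1 - 1 / (kopt : ℝ)) ^ j) * f OPT ≤ f (S j) :=
  greedy_submodular_bound_general f hnonneg hmono hsub kopt hkopt OPT hOPT S hgreedy
end

section
/- Budget-scaled greedy bound: let f be monotone submodular with f(∅)=0 on a finite set V, each v ∈ V has a positive expected weight a_v, and OPT is an optimal solution of expected weight at most B. If a sequence of solutions satisfies g_1(y) ≥ [1 - (1 - (w + a_min)/(B(k+1)))^{k+1}] f(OPT) whenever a solution of expected weight w and size k is extended by the element of best gain-to-weight ratio, then after the expected weight reaches B·(1 - o(1)), the function value is at least (1/2)(1 - 1/e)(1 - o(1)) f(OPT) when combined with the single best element. -/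
/-- Budget-scaled greedy bound: if a solution of expected weight `w ≥ B(1-ε)` and
size `k` has value `v ≥ [1 - (1 - (w + a_min)/(B(k+1)))^{k+1}] f(OPT)`, then
combined with the single best element (taking the max with `vbest`), the value is
at least `(1/2)(1 - 1/e)(1-ε) f(OPT)`. -/
theorem budget_scaled_greedy_bound (fOPT B amin w ε v vbest : ℝ) (k : ℕ)
    (hf : 0 ≤ fOPT) (hB : 0 < B) (ha : 0 < amin)
    (hε0 : 0 ≤ ε) (hε1 : ε ≤ 1)
    (hw : B * (1 - ε) ≤ w) (hwk : w + amin ≤ B * (k + 1))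
    (hv : (1 - (1 - (w + amin) / (B * (k + 1))) ^ (k + 1)) * fOPT ≤ v) :
    (1 / 2) * (1 - Real.exp (-1)) * (1 - ε) * fOPT ≤ max v vbest := by
  refine le_trans (le_trans ?_ hv) (le_max_left v vbest)
  have hBk : (0:ℝ) < B * (k + 1) := by positivity
  set x : ℝ := (w + amin) / (B * (k + 1)) with hxdef
  have hx1 : x ≤ 1 := by rw [hxdef, div_le_one hBk]; linarith
  have hwpos : 0 ≤ w := by nlinarith
  have hx0 : 0 ≤ x := by positivity
  have h1x : 1 - x ≤ Real.exp (-x) := by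
    have := Real.add_one_le_exp (-x); linarith
  have hpow : (1 - x) ^ (k + 1) ≤ Real.exp (-(x * (k + 1))) := by
    calc (1 - x) ^ (k + 1) ≤ (Real.exp (-x)) ^ (k + 1) :=
          pow_le_pow_left₀ (by linarith) h1x _
      _ = Real.exp ((k + 1 : ℕ) * (-x)) := (Real.exp_nat_mul _ _).symm
      _ = Real.exp (-(x * (k + 1))) := by push_cast; ring_nf
  have hxk : x * (k + 1) = (w + amin) / B := by
    rw [hxdef]; field_simp
  have ht : 1 - ε ≤ (w + amin) / B := by
    rw [le_div_iff₀ hB]; nlinarith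
  have hexp : Real.exp (-(x * (k + 1))) ≤ Real.exp (-(1 - ε)) := by
    apply Real.exp_le_exp.2; rw [hxk]; linarith
  have hconv : Real.exp (-(1 - ε)) ≤ ε * 1 + (1 - ε) * Real.exp (-1) := by
    have h := convexOn_exp.2 (Set.mem_univ (0:ℝ)) (Set.mem_univ (-1:ℝ))
      hε0 (by linarith : (0:ℝ) ≤ 1 - ε) (by ring)
    simpa [Real.exp_zero, smul_eq_mul] using h
  have hepos : 0 < Real.exp (-1) := Real.exp_pos _
  have hele : Real.exp (-1) ≤ 1 := by
    rw [Real.exp_le_one_iff]; norm_num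
  have key : (1 / 2) * (1 - Real.exp (-1)) * (1 - ε) ≤ 1 - (1 - x) ^ (k + 1) := by
    have hchain : (1 - x) ^ (k + 1) ≤ ε * 1 + (1 - ε) * Real.exp (-1) :=
      le_trans hpow (le_trans hexp hconv)
    nlinarith
  nlinarith [mul_le_mul_of_nonneg_right key hf]
end
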